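/- arXiv:2103.12438 — 2 statements merged into one kernel-verified Lean document; each statement's English description precedes it below -/
import Mathlib

section
/- Let (G,θ) be an oriented pro-ℓ group, (A,θ°) a θ°-abelian oriented pro-ℓ group, and ψ: G → A a continuous homomorphism with θ = θ° ∘ ψ. Then ψ(K_θ(G)) = {1}, and moreover ψ(I_θ(G)) = {1}, where I_θ(G) is the closed isolator of K_θ(G) in ker θ; hence ψ factors uniquely through the quotient G(θ) = G/I_θ(G). -/
open scoped Topology

/-- A pro-`p` group: a compact, totally disconnected topological group all of whose
open normal subgroups have `p`-power index. -/
def IsProPGroup (p : ℕ) (G : Type*) [Group G] [TopologicalSpace G] : Prop :=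
  CompactSpace G ∧ TotallyDisconnectedSpace G ∧
    ∀ U : Subgroup G, U.Normal → IsOpen (U : Set G) → ∃ k : ℕ, U.index = p ^ k

/-- `p`-adic exponentiation `h ^ λ` for `λ ∈ ℤ_[p]`, defined as the limit of `h ^ n`
as the integer `n` tends `p`-adically to `λ`. -/
noncomputable def padicPow (p : ℕ) [Fact p.Prime] {G : Type*} [Group G] [TopologicalSpace G]
    (h : G) (lam : ℤ_[p]) : G :=
  haveI : Nonempty G := ⟨1⟩
  Filter.limUnder (Filter.comap (fun n : ℤ => (n : ℤ_[p])) (𝓝 lam)) (fun n : ℤ => h ^ n)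

section Oriented

variable (p : ℕ) [Fact p.Prime] {G : Type*} [Group G] [TopologicalSpace G] [IsTopologicalGroup G]

/-- The subgroup `K_θ(G)`: the closed subgroup generated by the elements
`h ^ (-θ(g)) * (g * h * g⁻¹)` with `g ∈ G` and `h ∈ ker θ`. -/
noncomputable def Ktheta (θ : G →* ℤ_[p]ˣ) : Subgroup G :=
  (Subgroup.closure {x : G | ∃ g h : G, h ∈ θ.ker ∧
      x = padicPow p h (-((θ g : ℤ_[p]ˣ) : ℤ_[p])) * (g * h * g⁻¹)}).topologicalClosure

/-- `I_θ(G)`: the closure of the isolator of `K_θ(G)` in `ker θ`. -/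
noncomputable def Itheta (θ : G →* ℤ_[p]ˣ) : Subgroup G :=
  (Subgroup.closure {g : G | g ∈ θ.ker ∧ ∃ k : ℕ, g ^ (p ^ k) ∈ Ktheta p θ}).topologicalClosure

/-- The oriented pro-`p` group `(G,θ)` is torsion-free: `p ≠ 2`, or `im θ ⊆ 1 + 4ℤ₂`. -/
def OriTorsionFree (θ : G →* ℤ_[p]ˣ) : Prop :=
  p ≠ 2 ∨ ∀ g : G, ∃ y : ℤ_[p], ((θ g : ℤ_[p]ˣ) : ℤ_[p]) = 1 + 4 * y

/-- `(G,θ)` is `θ`-abelian: `ker θ` is a torsion-free abelian group which coincides with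
the `θ`-center, i.e. `g h g⁻¹ = h ^ θ(g)` for all `g ∈ G`, `h ∈ ker θ`. -/
noncomputable def IsThetaAbelian (θ : G →* ℤ_[p]ˣ) : Prop :=
  (∀ h₁ ∈ θ.ker, ∀ h₂ ∈ θ.ker, h₁ * h₂ = h₂ * h₁) ∧
  (∀ h ∈ θ.ker, ∀ n : ℕ, n ≠ 0 → h ^ n = 1 → h = 1) ∧
  (∀ g : G, ∀ h ∈ θ.ker, g * h * g⁻¹ = padicPow p h ((θ g : ℤ_[p]ˣ) : ℤ_[p]))

/-- `(G,θ)` is split `θ`-abelian: it is `θ`-abelian (so `ker θ` is a free abelian pro-`p`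
group) and the projection `G → G/ker θ` splits, i.e. `ker θ` has a closed complement. -/
noncomputable def IsSplitThetaAbelian (θ : G →* ℤ_[p]ˣ) : Prop :=
  IsThetaAbelian p θ ∧
    ∃ C : Subgroup G, IsClosed (C : Set G) ∧ C ⊓ θ.ker = ⊥ ∧ C ⊔ θ.ker = ⊤

/-- `(G,θ)` is Kummerian: `ker θ / K_θ(G)` is a torsion-free (equivalently, free)
abelian pro-`p` group, i.e. `K_θ(G)` is isolated in `ker θ`. -/
noncomputable def IsKummerian (θ : G →* ℤ_[p]ˣ) : Prop :=
  ∀ h ∈ θ.ker, ∀ k : ℕ, h ^ (p ^ k) ∈ Ktheta p θ → h ∈ Ktheta p θ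

end Oriented

section Frattini

variable (p : ℕ) (G : Type*) [Group G] [TopologicalSpace G] [IsTopologicalGroup G]

/-- The Frattini subgroup `Φ(G) = cl(G^p [G,G])` of a pro-`p` group. -/
def proFrattini : Subgroup G :=
  ((Subgroup.closure {x : G | ∃ g : G, x = g ^ p}) ⊔ commutator G).topologicalClosure

/-- `G` is powerful: `[G,G] ⊆ cl(G^p)` (`cl(G^4)` if `p = 2`). -/
def IsPowerfulPro : Prop :=
  (commutator G : Set G) ⊆
    ((Subgroup.closure {x : G | ∃ g : G, x = g ^ (if p = 2 then 4 else p)}).topologicalClosure :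
      Set G)

/-- Topologically finitely generated. -/
def IsTopFG : Prop :=
  ∃ S : Finset G, (Subgroup.closure (S : Set G)).topologicalClosure = ⊤

/-- Torsion-free group. -/
def IsTorsionFreeGrp : Prop := ∀ g : G, ∀ n : ℕ, n ≠ 0 → g ^ n = 1 → g = 1

/-- A uniform (uniformly powerful) pro-`p` group: finitely generated, powerful and
torsion-free. -/
def IsUniformProP : Prop :=
  IsProPGroup p G ∧ IsTopFG G ∧ IsPowerfulPro p G ∧ IsTorsionFreeGrp G

/-- Locally uniform: every closed subgroup is uniform. -/
def IsLocallyUniform : Prop :=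
  ∀ H : Subgroup G, IsClosed (H : Set G) → IsUniformProP p H

/-- A free pro-`p` group: a pro-`p` group which is projective with respect to surjections
of finite `p`-groups (equivalently, of cohomological dimension at most one). -/
def IsFreeProP : Prop :=
  IsProPGroup p G ∧
  ∀ (A B : Type) [Group A] [Group B], Finite A → Finite B →
    IsPGroup p A → IsPGroup p B → ∀ f : A →* B, Function.Surjective f →
    ∀ φ : G →* B, @Continuous G B _ ⊥ φ →
      ∃ ψ : G →* A, @Continuous G A _ ⊥ ψ ∧ f.comp ψ = φ

end Frattini


/-!
Conjugation in a `θ₀`-abelian group acts on `ker θ₀` by `θ₀`-th powers, so `ψ` kills every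
generator `h ^ (-θ(g)) * g h g⁻¹` of `K_θ(G)`; an element of `ker θ` with a `p`-power in `K_θ(G)`
is then sent to a torsion element of the torsion-free group `ker θ₀`. Kernels of continuous maps to
`A` are closed, which takes care of the closures. The topological input is that in a pro-`p` group
`n ↦ h ^ n` is Cauchy for the `p`-adic filter on `ℤ` (each open normal subgroup has `p`-power
index), so `p`-adic powers are genuine limits and commute with continuous homomorphisms.
-/

open Filter Topology

namespace PadicInt

variable (p : ℕ) [Fact p.Prime]

noncomputable abbrev intNhds (lam : ℤ_[p]) : Filter ℤ := comap ((↑) : ℤ → ℤ_[p]) (𝓝 lam)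

variable {p}

instance neBot_intNhds (lam : ℤ_[p]) : (intNhds p lam).NeBot :=
  comap_neBot_iff_frequently.2 (mem_closure_iff_frequently.1 (denseRange_intCast lam))

theorem eventually_pow_dvd_sub_intCast (lam : ℤ_[p]) (k : ℕ) :
    ∀ᶠ nm : ℤ × ℤ in intNhds p lam ×ˢ intNhds p lam, (p : ℤ) ^ k ∣ nm.2 - nm.1 := by
  have hsub : Tendsto (fun nm : ℤ × ℤ => ((nm.2 - nm.1 : ℤ) : ℤ_[p]))
      (intNhds p lam ×ˢ intNhds p lam) (𝓝 0) := by
    have hcast : Tendsto ((↑) : ℤ → ℤ_[p]) (intNhds p lam) (𝓝 lam) := tendsto_comap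
    simpa using (hcast.comp tendsto_snd).sub (hcast.comp tendsto_fst)
  have hball : Metric.closedBall (0 : ℤ_[p]) ((p : ℝ) ^ (-(k : ℤ))) ∈ 𝓝 0 :=
    Metric.closedBall_mem_nhds 0 (zpow_pos (by exact_mod_cast (Fact.out : p.Prime).pos) _)
  filter_upwards [hsub hball] with nm hnm
  rw [← norm_int_le_pow_iff_dvd]
  simpa using hnm

end PadicInt

section ProP

variable {p : ℕ} [Fact p.Prime] {G : Type*} [Group G] [TopologicalSpace G]

theorem IsProPGroup.eventually_zpow_sub_mem (hG : IsProPGroup p G) (H : OpenNormalSubgroup G)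
    (h : G) (lam : ℤ_[p]) :
    ∀ᶠ nm : ℤ × ℤ in PadicInt.intNhds p lam ×ˢ PadicInt.intNhds p lam,
      h ^ nm.2 * (h ^ nm.1)⁻¹ ∈ H.toSubgroup := by
  obtain ⟨k, hk⟩ := hG.2.2 H.toSubgroup inferInstance H.isOpen'
  filter_upwards [PadicInt.eventually_pow_dvd_sub_intCast lam k] with ⟨n, m⟩ ⟨c, hc⟩
  have : h ^ m * (h ^ n)⁻¹ = (h ^ H.toSubgroup.index) ^ c := by
    rw [← zpow_neg, ← zpow_add, hk, ← zpow_natCast, ← zpow_mul]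
    push_cast
    rw [← hc]; ring_nf
  rw [this]
  exact H.toSubgroup.zpow_mem (H.toSubgroup.pow_index_mem h) c

variable [IsTopologicalGroup G]

theorem IsProPGroup.tendsto_zpow_padicPow (hG : IsProPGroup p G) (h : G) (lam : ℤ_[p]) :
    Tendsto (h ^ · : ℤ → G) (PadicInt.intNhds p lam) (𝓝 (padicPow p h lam)) := by
  have : CompactSpace G := hG.1
  have : TotallyDisconnectedSpace G := hG.2.1
  let := IsTopologicalGroup.rightUniformSpace G
  have hcauchy : Cauchy (map (h ^ · : ℤ → G) (PadicInt.intNhds p lam)) := by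
    refine cauchy_map_iff.2 ⟨inferInstance, fun U hU => ?_⟩
    obtain ⟨V, hVU, hV⟩ := (show U ∈ comap (fun x : G × G => x.2 * x.1⁻¹) (𝓝 1) from hU)
    obtain ⟨H, hHV⟩ := ProfiniteGrp.exist_openNormalSubgroup_sub_open_nhds_of_one
      isOpen_interior (mem_interior_iff_mem_nhds.2 hVU)
    refine mem_map.2 ?_
    filter_upwards [hG.eventually_zpow_sub_mem H h lam] with nm hnm
    exact hV (interior_subset (s := V) (hHV hnm))
  exact tendsto_nhds_limUnder (cauchy_map_iff_exists_tendsto.1 hcauchy)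

theorem IsProPGroup.padicPow_neg (hG : IsProPGroup p G) (h : G) (lam : ℤ_[p]) :
    padicPow p h (-lam) = (padicPow p h lam)⁻¹ := by
  have : TotallyDisconnectedSpace G := hG.2.1
  have hneg : Tendsto (fun n : ℤ => -n) (PadicInt.intNhds p (-lam)) (PadicInt.intNhds p lam) := by
    refine tendsto_comap_iff.2 ?_
    simpa [Function.comp_def] using
      (tendsto_comap (f := ((↑) : ℤ → ℤ_[p])) (x := 𝓝 (-lam))).neg
  refine tendsto_nhds_unique (hG.tendsto_zpow_padicPow h (-lam)) ?_
  simpa [Function.comp_def] using ((hG.tendsto_zpow_padicPow h lam).inv).comp hneg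

theorem IsProPGroup.map_padicPow {A : Type*} [Group A] [TopologicalSpace A] [T2Space A]
    (hG : IsProPGroup p G) (ψ : G →* A) (hψ : Continuous ψ) (h : G) (lam : ℤ_[p]) :
    ψ (padicPow p h lam) = padicPow p (ψ h) lam := by
  have := ((hψ.tendsto _).comp (hG.tendsto_zpow_padicPow h lam))
  simp only [Function.comp_def, map_zpow] at this
  exact this.limUnder_eq.symm

end ProP

section ThetaAbelian

variable {p : ℕ} [Fact p.Prime] {G A : Type*} [Group G] [TopologicalSpace G]
  [IsTopologicalGroup G] [Group A] [TopologicalSpace A]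

theorem Ktheta_comp_le_ker [IsTopologicalGroup A] (hG : IsProPGroup p G) (hA : IsProPGroup p A)
    {θ₀ : A →* ℤ_[p]ˣ}
    (hconj : ∀ g : A, ∀ h ∈ θ₀.ker, g * h * g⁻¹ = padicPow p h ((θ₀ g : ℤ_[p]ˣ) : ℤ_[p]))
    {ψ : G →* A} (hψ : Continuous ψ) : Ktheta p (θ₀.comp ψ) ≤ ψ.ker := by
  have : TotallyDisconnectedSpace A := hA.2.1
  refine Subgroup.topologicalClosure_minimal _ ?_ (isClosed_singleton.preimage hψ)
  rw [Subgroup.closure_le]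
  rintro _ ⟨g, h, hh, rfl⟩
  rw [SetLike.mem_coe, MonoidHom.mem_ker, map_mul, hG.map_padicPow ψ hψ, map_mul, map_mul,
    map_inv, hconj _ _ hh, MonoidHom.comp_apply, hA.padicPow_neg, inv_mul_cancel]

theorem Itheta_comp_le_ker [T1Space A] {θ₀ : A →* ℤ_[p]ˣ}
    (htf : ∀ h ∈ θ₀.ker, ∀ n : ℕ, n ≠ 0 → h ^ n = 1 → h = 1)
    {ψ : G →* A} (hψ : Continuous ψ) (hK : Ktheta p (θ₀.comp ψ) ≤ ψ.ker) :
    Itheta p (θ₀.comp ψ) ≤ ψ.ker := by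
  refine Subgroup.topologicalClosure_minimal _ ?_ (isClosed_singleton.preimage hψ)
  rw [Subgroup.closure_le]
  rintro g ⟨hg, k, hgk⟩
  exact htf (ψ g) hg (p ^ k) (pow_ne_zero _ (Fact.out : p.Prime).ne_zero) (map_pow ψ g _ ▸ hK hgk)

end ThetaAbelian

attribute [local instance] Subgroup.is_normal_topologicalClosure
/-- If `(A,θ°)` is `θ°`-abelian and `ψ : (G,θ) → (A,θ°)` is a morphism
of oriented pro-`p` groups, then `ψ(K_θ(G)) = 1`, `ψ(I_θ(G)) = 1`, and hence `ψ` factors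
(uniquely) through `G(θ) = G/I_θ(G)`. -/
theorem stmt2 (p : ℕ) [Fact p.Prime] (G A : Type) [Group G] [TopologicalSpace G]
    [IsTopologicalGroup G] [Group A] [TopologicalSpace A] [IsTopologicalGroup A]
    (hG : IsProPGroup p G) (hA : IsProPGroup p A)
    (θ : G →* ℤ_[p]ˣ) (θ₀ : A →* ℤ_[p]ˣ) (hab : IsThetaAbelian p θ₀)
    (ψ : G →* A) (hψ : Continuous ψ) (hcomp : θ = θ₀.comp ψ) :
    (∀ x ∈ Ktheta p θ, ψ x = 1) ∧
    (∀ x ∈ Itheta p θ, ψ x = 1) ∧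
    (∀ x y : G, x⁻¹ * y ∈ Itheta p θ → ψ x = ψ y) := by
  subst hcomp
  have : TotallyDisconnectedSpace A := hA.2.1
  have hK := Ktheta_comp_le_ker hG hA hab.2.2 hψ
  have hI := Itheta_comp_le_ker hab.2.1 hψ hK
  exact ⟨fun x hx => hK hx, fun x hx => hI hx, fun x y hxy => (ψ.eq_iff.2 (hI hxy)).symm⟩
end

section
/- Let (G,θ) be an oriented pro-ℓ group and A a free abelian pro-ℓ group, and form the semidirect product A ⋊ G where g a g^{-1} = a^{θ(g)}, with orientation θ∘π (π the projection to G). Then K_{θ∘π}(A ⋊ G) = K_θ(G); consequently A ⋊ (G,θ) is Kummerian iff (G,θ) is, and has the Bogomolov property iff (G,θ) does. -/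
open scoped Topology

/-!
Write `h = a c` and `g = b d` with `a, b ∈ A` and `c, d ∈ C`. Since `ker θ` acts trivially on
`A`, `c` commutes with `a` and `b` commutes with `d c d⁻¹`; hence `g h g⁻¹ = a^{θ(d)} · d c d⁻¹`
and `h^{-θ(g)} = a^{-θ(d)} c^{-θ(d)}`, so the generator `h^{-θ(g)} · g h g⁻¹` of `K_θ(A ⋊ C)`
equals the generator `c^{-θ(d)} · d c d⁻¹` of `K_θ(C)`. Both groups are therefore the closure of
the same set. If moreover `h ∈ ker θ` has `hⁿ ∈ C` for some `n ≠ 0`, then `aⁿ ∈ A ∩ C = 1`, so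
`a = 1` as `A` is torsion-free and `h ∈ C`; this transports the Kummer property, and the
Bogomolov property follows since the two groups `K_θ` are isomorphic as topological groups.

The `p`-adic powers `h ^ λ` are limits of `h ^ n` as the integer `n` tends to `λ`; they exist
because `h ^ n (h ^ m)⁻¹` lies in a given open normal subgroup of index `p ^ k` once
`p ^ k ∣ n - m`.
-/

open Filter

theorem Subgroup.zpow_mul_inv_zpow_mem_of_index_dvd {G : Type*} [Group G] (H : Subgroup G)
    [H.Normal] (h : G) {n m : ℤ} (hnm : (H.index : ℤ) ∣ n - m) : h ^ n * (h ^ m)⁻¹ ∈ H := by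
  obtain ⟨t, ht⟩ := hnm
  rw [← zpow_sub, ht, zpow_mul, zpow_natCast]
  exact H.zpow_mem (H.pow_index_mem h) t

section PadicNhdsInt

variable (p : ℕ) [Fact p.Prime]

/-- The filter along which `padicPow p h lam` is the limit of `h ^ n`. -/
noncomputable def padicNhdsInt (lam : ℤ_[p]) : Filter ℤ :=
  comap (fun n : ℤ => (n : ℤ_[p])) (𝓝 lam)

instance (lam : ℤ_[p]) : (padicNhdsInt p lam).NeBot :=
  comap_neBot fun _ ht => PadicInt.denseRange_intCast.mem_nhds ht

variable {p}

theorem eventually_norm_intCast_sub_le (lam : ℤ_[p]) (k : ℕ) :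
    ∀ᶠ n : ℤ in padicNhdsInt p lam, ‖(n : ℤ_[p]) - lam‖ ≤ (p : ℝ) ^ (-k : ℤ) := by
  have hpos : (0 : ℝ) < (p : ℝ) ^ (-k : ℤ) :=
    zpow_pos (by exact_mod_cast (Fact.out : p.Prime).pos) _
  refine mem_of_superset (preimage_mem_comap (Metric.closedBall_mem_nhds lam hpos)) ?_
  intro n hn
  simpa [dist_eq_norm] using hn

theorem eventually_pow_dvd_sub {lam : ℤ_[p]} {k : ℕ} {n₀ : ℤ}
    (h₀ : ‖(n₀ : ℤ_[p]) - lam‖ ≤ (p : ℝ) ^ (-k : ℤ)) :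
    ∀ᶠ n in padicNhdsInt p lam, (p ^ k : ℤ) ∣ n - n₀ := by
  filter_upwards [eventually_norm_intCast_sub_le lam k] with n hn
  rw [← PadicInt.norm_int_le_pow_iff_dvd, Int.cast_sub, ← dist_eq_norm]
  rw [← dist_eq_norm] at hn h₀
  exact (dist_triangle_max _ lam _).trans (max_le hn (dist_comm (n₀ : ℤ_[p]) lam ▸ h₀))

theorem tendsto_neg_padicNhdsInt (lam : ℤ_[p]) :
    Tendsto Neg.neg (padicNhdsInt p lam) (padicNhdsInt p (-lam)) := by
  unfold padicNhdsInt
  exact tendsto_comap_iff.2 <| by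
    simpa [Function.comp_def] using (tendsto_neg lam).comp tendsto_comap

end PadicNhdsInt

section Profinite

variable {G : Type*} [Group G] [TopologicalSpace G] [IsTopologicalGroup G] [CompactSpace G]
  [TotallyDisconnectedSpace G] {ι : Type*} {F : Filter ι} {f : ι → G}

theorem tendsto_of_forall_openNormalSubgroup {L : G}
    (hf : ∀ H : OpenNormalSubgroup G, ∀ᶠ i in F, f i * L⁻¹ ∈ H) : Tendsto f F (𝓝 L) := by
  intro U hU
  obtain ⟨V, hVU, hVopen, hLV⟩ := mem_nhds_iff.mp hU
  obtain ⟨H, hH⟩ := ProfiniteGrp.exist_openNormalSubgroup_sub_open_nhds_of_one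
    (hVopen.preimage (continuous_mul_const L)) (by simpa using hLV)
  refine mem_map.2 ?_
  filter_upwards [hf H] with i hi using by simpa using hVU (hH hi)

theorem exists_tendsto_of_forall_openNormalSubgroup [F.NeBot]
    (hf : ∀ H : OpenNormalSubgroup G, ∃ x, ∀ᶠ i in F, f i * x⁻¹ ∈ H) :
    ∃ L, Tendsto f F (𝓝 L) := by
  obtain ⟨L, hL⟩ := exists_clusterPt_of_compactSpace (map f F)
  refine ⟨L, tendsto_of_forall_openNormalSubgroup fun H => ?_⟩
  obtain ⟨x, hx⟩ := hf H
  have hcoset : IsClosed {y : G | y * x⁻¹ ∈ H} :=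
    H.toOpenSubgroup.isClosed.preimage (continuous_mul_const _)
  have hLx : L * x⁻¹ ∈ H := hcoset.mem_of_mapClusterPt hL hx
  filter_upwards [hx] with i hi
  simpa using mul_mem hi (inv_mem hLx)

end Profinite

namespace IsProPGroup

variable {p : ℕ} {G : Type*} [Group G] [TopologicalSpace G]

theorem t2Space [IsTopologicalGroup G] (hG : IsProPGroup p G) : T2Space G :=
  have := hG.2.1
  IsTopologicalGroup.t2Space_iff_one_closed.mpr isClosed_singleton

theorem of_continuousMulEquiv {H : Type*} [Group H] [TopologicalSpace H] (e : G ≃ₜ* H)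
    (hG : IsProPGroup p G) : IsProPGroup p H := by
  obtain ⟨hc, htd, hidx⟩ := hG
  refine ⟨e.toHomeomorph.compactSpace, e.toHomeomorph.totallyDisconnectedSpace,
    fun U hN hO => ?_⟩
  rw [← U.index_comap_of_surjective (f := e.toMonoidHom) e.surjective]
  exact hidx _ (hN.comap _) (hO.preimage e.continuous)

variable [Fact p.Prime]

theorem exists_eventually_zpow_mul_inv_mem (hG : IsProPGroup p G) (h : G)
    (H : OpenNormalSubgroup G) :
    ∃ k : ℕ, ∀ (lam : ℤ_[p]) (n₀ : ℤ), ‖(n₀ : ℤ_[p]) - lam‖ ≤ (p : ℝ) ^ (-k : ℤ) →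
      ∀ᶠ n in padicNhdsInt p lam, h ^ n * (h ^ n₀)⁻¹ ∈ H := by
  obtain ⟨k, hk⟩ := hG.2.2 H H.isNormal' H.isOpen
  refine ⟨k, fun lam n₀ h₀ => ?_⟩
  filter_upwards [eventually_pow_dvd_sub h₀] with n hn
  exact (H : Subgroup G).zpow_mul_inv_zpow_mem_of_index_dvd h (by rw [hk]; exact_mod_cast hn)

variable [IsTopologicalGroup G]

theorem tendsto_padicPow (hG : IsProPGroup p G) (h : G) (lam : ℤ_[p]) :
    Tendsto (h ^ ·) (padicNhdsInt p lam) (𝓝 (padicPow p h lam)) := by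
  have := hG.1
  have := hG.2.1
  refine tendsto_nhds_limUnder (exists_tendsto_of_forall_openNormalSubgroup fun H => ?_)
  obtain ⟨k, hk⟩ := hG.exists_eventually_zpow_mul_inv_mem h H
  obtain ⟨n₀, h₀⟩ := (eventually_norm_intCast_sub_le lam k).exists
  exact ⟨h ^ n₀, hk lam n₀ h₀⟩

theorem padicPow_eq_of_tendsto (hG : IsProPGroup p G) {h x : G} {lam : ℤ_[p]}
    (hx : Tendsto (h ^ ·) (padicNhdsInt p lam) (𝓝 x)) : padicPow p h lam = x :=
  have := hG.t2Space
  tendsto_nhds_unique (hG.tendsto_padicPow h lam) hx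

theorem padicPow_intCast (hG : IsProPGroup p G) (h : G) (m : ℤ) : padicPow p h m = h ^ m := by
  have := hG.1
  have := hG.2.1
  refine hG.padicPow_eq_of_tendsto (tendsto_of_forall_openNormalSubgroup fun H => ?_)
  obtain ⟨k, hk⟩ := hG.exists_eventually_zpow_mul_inv_mem h H
  exact hk m m (by simp)

theorem padicPow_one (hG : IsProPGroup p G) (h : G) : padicPow p h 1 = h := by
  simpa using hG.padicPow_intCast h 1

theorem padicPow_neg_s13 (hG : IsProPGroup p G) (h : G) (lam : ℤ_[p]) :
    padicPow p h (-lam) = (padicPow p h lam)⁻¹ :=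
  hG.padicPow_eq_of_tendsto <| ((hG.tendsto_padicPow h lam).inv.comp
    (by simpa using tendsto_neg_padicNhdsInt (p := p) (-lam))).congr fun n => by simp

theorem padicPow_mul_of_commute (hG : IsProPGroup p G) {a b : G} (hab : Commute a b)
    (lam : ℤ_[p]) : padicPow p (a * b) lam = padicPow p a lam * padicPow p b lam :=
  hG.padicPow_eq_of_tendsto <| ((hG.tendsto_padicPow a lam).mul
    (hG.tendsto_padicPow b lam)).congr fun n => (hab.mul_zpow n).symm

theorem padicPow_mem (hG : IsProPGroup p G) {K : Subgroup G} (hK : IsClosed (K : Set G))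
    {h : G} (hh : h ∈ K) (lam : ℤ_[p]) : padicPow p h lam ∈ K :=
  hK.mem_of_tendsto (hG.tendsto_padicPow h lam) (Eventually.of_forall fun n => K.zpow_mem hh n)

theorem commute_padicPow (hG : IsProPGroup p G) {x h : G} (hx : Commute x h) (lam : ℤ_[p]) :
    Commute x (padicPow p h lam) := by
  have := hG.t2Space
  have hmem := hG.padicPow_mem (K := Subgroup.centralizer {x}) (Set.isClosed_centralizer _)
    (Subgroup.mem_centralizer_singleton_iff.2 hx.eq.symm) lam
  exact (Subgroup.mem_centralizer_singleton_iff.1 hmem).symm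

theorem coe_padicPow (hG : IsProPGroup p G) {C : Subgroup G} (hC : IsClosed (C : Set G))
    (c : C) (lam : ℤ_[p]) : ((padicPow p c lam : C) : G) = padicPow p (c : G) lam := by
  have := hG.t2Space
  have hlim : Tendsto (c ^ ·) (padicNhdsInt p lam) (𝓝 ⟨_, hG.padicPow_mem hC c.2 lam⟩) := by
    rw [Topology.IsEmbedding.subtypeVal.tendsto_nhds_iff]
    simpa [Function.comp_def] using hG.tendsto_padicPow (c : G) lam
  exact congrArg Subtype.val hlim.limUnder_eq

end IsProPGroup


theorem IsFreeProP.of_continuousMulEquiv {p : ℕ} {G H : Type*} [Group G] [TopologicalSpace G]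
    [Group H] [TopologicalSpace H] (e : G ≃ₜ* H) (hG : IsFreeProP p G) : IsFreeProP p H := by
  obtain ⟨hpro, hlift⟩ := hG
  refine ⟨hpro.of_continuousMulEquiv e, fun A B _ _ fA fB hpA hpB f hf φ hφ => ?_⟩
  obtain ⟨ψ, hψc, hψe⟩ := hlift A B fA fB hpA hpB f hf (φ.comp e.toMonoidHom)
    (@Continuous.comp G H B _ _ ⊥ _ _ hφ e.continuous)
  refine ⟨ψ.comp e.symm.toMonoidHom, @Continuous.comp H G A _ _ ⊥ _ _ hψc e.symm.continuous, ?_⟩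
  ext x
  exact (DFunLike.congr_fun hψe (e.symm x)).trans (congrArg φ (e.apply_symm_apply x))

def Subgroup.continuousMulEquivMapSubtype {G : Type*} [Group G] [TopologicalSpace G]
    (C : Subgroup G) (K : Subgroup C) : K ≃ₜ* K.map C.subtype where
  toFun k := ⟨k, K.mem_map_of_mem C.subtype k.2⟩
  invFun y := ⟨⟨y, by obtain ⟨x, -, hx⟩ := y.2; exact hx ▸ x.2⟩, by
    obtain ⟨x, hxK, hx⟩ := y.2
    rwa [show (⟨y, _⟩ : C) = x from Subtype.ext hx.symm]⟩
  left_inv _ := rfl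
  right_inv _ := rfl
  map_mul' _ _ := rfl
  continuous_toFun := (continuous_subtype_val.comp continuous_subtype_val).subtype_mk _
  continuous_invFun := (continuous_subtype_val.subtype_mk _).subtype_mk _

theorem isFreeProP_map_subtype_iff {p : ℕ} {G : Type*} [Group G] [TopologicalSpace G]
    (C : Subgroup G) (K : Subgroup C) : IsFreeProP p (K.map C.subtype) ↔ IsFreeProP p K :=
  ⟨.of_continuousMulEquiv (C.continuousMulEquivMapSubtype K).symm,
    .of_continuousMulEquiv (C.continuousMulEquivMapSubtype K)⟩

theorem Subgroup.map_topologicalClosure_of_isClosedEmbedding {G H : Type*} [Group G]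
    [TopologicalSpace G] [IsTopologicalGroup G] [Group H] [TopologicalSpace H]
    [IsTopologicalGroup H] {f : G →* H} (hf : Topology.IsClosedEmbedding f) (K : Subgroup G) :
    K.topologicalClosure.map f = (K.map f).topologicalClosure :=
  SetLike.coe_injective (hf.closure_image_eq K).symm

section Ktheta

variable {p : ℕ} [Fact p.Prime] {G : Type*} [Group G] [TopologicalSpace G]

variable (p) in
def kthetaGenerators (θ : G →* ℤ_[p]ˣ) : Set G :=
  {x | ∃ g h : G, h ∈ θ.ker ∧ x = padicPow p h (-((θ g : ℤ_[p]ˣ) : ℤ_[p])) * (g * h * g⁻¹)}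

variable [IsTopologicalGroup G]

theorem Ktheta_eq_topologicalClosure (θ : G →* ℤ_[p]ˣ) :
    Ktheta p θ = (Subgroup.closure (kthetaGenerators p θ)).topologicalClosure :=
  rfl

theorem image_kthetaGenerators_comp_subtype_subset (hG : IsProPGroup p G) (θ : G →* ℤ_[p]ˣ)
    {C : Subgroup G} (hC : IsClosed (C : Set G)) :
    C.subtype '' kthetaGenerators p (θ.comp C.subtype) ⊆ kthetaGenerators p θ := by
  rintro _ ⟨_, ⟨g, h, hh, rfl⟩, rfl⟩
  exact ⟨g, h, hh, by simp [hG.coe_padicPow hC]⟩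

theorem Ktheta_eq_map_subtype_of_generators {θ : G →* ℤ_[p]ˣ} {C : Subgroup G}
    (hC : IsClosed (C : Set G))
    (hgen : kthetaGenerators p θ = C.subtype '' kthetaGenerators p (θ.comp C.subtype)) :
    Ktheta p θ = (Ktheta p (θ.comp C.subtype)).map C.subtype := by
  rw [Ktheta_eq_topologicalClosure, Ktheta_eq_topologicalClosure,
    Subgroup.map_topologicalClosure_of_isClosedEmbedding hC.isClosedEmbedding_subtypeVal,
    MonoidHom.map_closure, hgen]

theorem isKummerian_iff_of_Ktheta_eq_map {θ : G →* ℤ_[p]ˣ} {C : Subgroup G}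
    (hK : Ktheta p θ = (Ktheta p (θ.comp C.subtype)).map C.subtype)
    (hroot : ∀ h ∈ θ.ker, ∀ k : ℕ, h ^ (p ^ k) ∈ C → h ∈ C) :
    IsKummerian p θ ↔ IsKummerian p (θ.comp C.subtype) := by
  have hmem (x : C) : (x : G) ∈ Ktheta p θ ↔ x ∈ Ktheta p (θ.comp C.subtype) := by
    rw [hK]
    exact Subgroup.mem_map_iff_mem Subtype.val_injective
  constructor
  · intro hKum x hx k hxk
    rw [← hmem] at hxk ⊢
    exact hKum x hx k hxk
  · intro hKum h hh k hhk
    have hhC : h ∈ C := hroot h hh k <| by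
      rw [hK] at hhk
      obtain ⟨y, -, hy⟩ := hhk
      exact hy ▸ y.2
    exact (hmem ⟨h, hhC⟩).2 (hKum ⟨h, hhC⟩ hh k ((hmem _).1 hhk))

end Ktheta

section SemidirectProduct

variable {p : ℕ} [Fact p.Prime] {G : Type*} [Group G] [TopologicalSpace G] [IsTopologicalGroup G]
  {θ : G →* ℤ_[p]ˣ} {A C : Subgroup G}

theorem commute_of_mem_ker (hG : IsProPGroup p G)
    (hact : ∀ g : G, ∀ a ∈ A, g * a * g⁻¹ = padicPow p a ((θ g : ℤ_[p]ˣ) : ℤ_[p]))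
    {c a : G} (hc : θ c = 1) (ha : a ∈ A) : Commute c a := by
  have := hact c a ha
  rw [hc, Units.val_one, hG.padicPow_one] at this
  exact mul_inv_eq_iff_eq_mul.1 this

theorem kthetaGenerator_mul_eq (hG : IsProPGroup p G) (hAker : A ≤ θ.ker)
    (hact : ∀ g : G, ∀ a ∈ A, g * a * g⁻¹ = padicPow p a ((θ g : ℤ_[p]ˣ) : ℤ_[p]))
    {a b c : G} (ha : a ∈ A) (hb : b ∈ A) (hc : θ c = 1) (d : G) :
    padicPow p (a * c) (-((θ (b * d) : ℤ_[p]ˣ) : ℤ_[p])) * ((b * d) * (a * c) * (b * d)⁻¹) =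
      padicPow p c (-((θ d : ℤ_[p]ˣ) : ℤ_[p])) * (d * c * d⁻¹) := by
  have hθ : θ (b * d) = θ d := by rw [map_mul, hAker hb, one_mul]
  have hca : Commute c a := commute_of_mem_ker hG hact hc ha
  have hb_dcd : Commute (d * c * d⁻¹) b := commute_of_mem_ker hG hact (by simp [hc]) hb
  set u := ((θ d : ℤ_[p]ˣ) : ℤ_[p])
  have hconj : (b * d) * (a * c) * (b * d)⁻¹ = padicPow p a u * (d * c * d⁻¹) :=
    calc (b * d) * (a * c) * (b * d)⁻¹
        = ((b * d) * a * (b * d)⁻¹) * (b * (d * c * d⁻¹) * b⁻¹) := by group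
      _ = padicPow p a u * (d * c * d⁻¹) := by
          rw [hact _ a ha, hθ, ← hb_dcd.eq, mul_inv_cancel_right]
  have hcomm : Commute (padicPow p a u) (padicPow p c (-u)) :=
    hG.commute_padicPow (hG.commute_padicPow hca u).symm (-u)
  rw [hθ, hconj, hG.padicPow_mul_of_commute hca.symm, hG.padicPow_neg_s13 a]
  calc (padicPow p a u)⁻¹ * padicPow p c (-u) * (padicPow p a u * (d * c * d⁻¹))
      = (padicPow p a u)⁻¹ * (padicPow p c (-u) * padicPow p a u) * (d * c * d⁻¹) := by group
    _ = padicPow p c (-u) * (d * c * d⁻¹) := by rw [← hcomm.eq]; group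

theorem kthetaGenerators_subset_image (hG : IsProPGroup p G) (hCclosed : IsClosed (C : Set G))
    [A.Normal] (hAker : A ≤ θ.ker)
    (hact : ∀ g : G, ∀ a ∈ A, g * a * g⁻¹ = padicPow p a ((θ g : ℤ_[p]ˣ) : ℤ_[p]))
    (hsup : A ⊔ C = ⊤) :
    kthetaGenerators p θ ⊆ C.subtype '' kthetaGenerators p (θ.comp C.subtype) := by
  rintro _ ⟨g, h, hh, rfl⟩
  obtain ⟨a, ha, c, hcC, rfl⟩ := Subgroup.mem_sup_of_normal_left.1 (hsup ▸ Subgroup.mem_top h)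
  obtain ⟨b, hb, d, hdC, rfl⟩ := Subgroup.mem_sup_of_normal_left.1 (hsup ▸ Subgroup.mem_top g)
  have hc : θ c = 1 := by
    rwa [MonoidHom.mem_ker, map_mul, MonoidHom.mem_ker.1 (hAker ha), one_mul] at hh
  let c' : C := ⟨c, hcC⟩
  let d' : C := ⟨d, hdC⟩
  refine ⟨padicPow p c' (-((θ d : ℤ_[p]ˣ) : ℤ_[p])) * (d' * c' * d'⁻¹), ⟨d', c', hc, rfl⟩, ?_⟩
  rw [kthetaGenerator_mul_eq hG hAker hact ha hb hc d]
  simp [c', d', hG.coe_padicPow hCclosed]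

theorem mem_of_pow_mem_of_mem_ker (hG : IsProPGroup p G) [A.Normal]
    (hAtf : ∀ a ∈ A, ∀ n : ℕ, n ≠ 0 → a ^ n = 1 → a = 1) (hAker : A ≤ θ.ker)
    (hact : ∀ g : G, ∀ a ∈ A, g * a * g⁻¹ = padicPow p a ((θ g : ℤ_[p]ˣ) : ℤ_[p]))
    (hinf : A ⊓ C = ⊥) (hsup : A ⊔ C = ⊤) {h : G} (hh : h ∈ θ.ker) {n : ℕ} (hn : n ≠ 0)
    (hhn : h ^ n ∈ C) : h ∈ C := by
  obtain ⟨a, ha, c, hcC, rfl⟩ := Subgroup.mem_sup_of_normal_left.1 (hsup ▸ Subgroup.mem_top h)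
  have hc : θ c = 1 := by
    rwa [MonoidHom.mem_ker, map_mul, MonoidHom.mem_ker.1 (hAker ha), one_mul] at hh
  have hanC : a ^ n ∈ C := by
    rw [(commute_of_mem_ker hG hact hc ha).symm.mul_pow] at hhn
    simpa using C.mul_mem hhn (C.inv_mem (C.pow_mem hcC n))
  have hanA : a ^ n ∈ A ⊓ C := ⟨A.pow_mem ha n, hanC⟩
  rw [hinf, Subgroup.mem_bot] at hanA
  rwa [hAtf a ha n hn hanA, one_mul]

end SemidirectProduct

theorem stmt13_general (p : ℕ) [Fact p.Prime] (Ghat : Type) [Group Ghat] [TopologicalSpace Ghat]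
    [IsTopologicalGroup Ghat] (hG : IsProPGroup p Ghat) (th : Ghat →* ℤ_[p]ˣ)
    (A C : Subgroup Ghat) (hAnormal : A.Normal)
    (hCclosed : IsClosed (C : Set Ghat))
    (hAtf : ∀ a ∈ A, ∀ n : ℕ, n ≠ 0 → a ^ n = 1 → a = 1)
    (hAker : A ≤ th.ker)
    (hact : ∀ g : Ghat, ∀ a ∈ A, g * a * g⁻¹ = padicPow p a ((th g : ℤ_[p]ˣ) : ℤ_[p]))
    (hinf : A ⊓ C = ⊥) (hsup : A ⊔ C = ⊤) :
    Ktheta p th = (Ktheta p (th.comp C.subtype)).map C.subtype ∧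
    (IsKummerian p th ↔ IsKummerian p (th.comp C.subtype)) ∧
    ((IsKummerian p th ∧ IsFreeProP p (Ktheta p th)) ↔
      (IsKummerian p (th.comp C.subtype) ∧
        IsFreeProP p (Ktheta p (th.comp C.subtype)))) := by
  have hK : Ktheta p th = (Ktheta p (th.comp C.subtype)).map C.subtype :=
    Ktheta_eq_map_subtype_of_generators hCclosed <| subset_antisymm
      (kthetaGenerators_subset_image hG hCclosed hAker hact hsup)
      (image_kthetaGenerators_comp_subtype_subset hG th hCclosed)
  have hKum : IsKummerian p th ↔ IsKummerian p (th.comp C.subtype) :=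
    isKummerian_iff_of_Ktheta_eq_map hK fun h hh k =>
      mem_of_pow_mem_of_mem_ker hG hAtf hAker hact hinf hsup hh
        (pow_ne_zero k (Fact.out : p.Prime).ne_zero)
  refine ⟨hK, hKum, and_congr hKum ?_⟩
  rw [hK]
  exact isFreeProP_map_subtype_iff C _

/-- Let `(Ghat, th)` be an oriented pro-`p` group which is an (internal)
semidirect product `Ghat = A ⋊ G` of a free abelian closed normal subgroup `A ≤ ker th`,
on which `Ghat` acts by `g a g⁻¹ = a^{th(g)}`, with a closed complement `G = C`. Then
`K_{th}(Ghat) = K_{th|_C}(C)`; consequently `(Ghat,th)` is Kummerian iff `(C,th|_C)` is, and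
`(Ghat,th)` has the Bogomolov property iff `(C,th|_C)` does. -/
theorem stmt13 (p : ℕ) [Fact p.Prime] (Ghat : Type) [Group Ghat] [TopologicalSpace Ghat]
    [IsTopologicalGroup Ghat] (hG : IsProPGroup p Ghat) (th : Ghat →* ℤ_[p]ˣ)
    (A C : Subgroup Ghat) (hAnormal : A.Normal)
    (hAclosed : IsClosed (A : Set Ghat)) (hCclosed : IsClosed (C : Set Ghat))
    (hAab : ∀ a ∈ A, ∀ b ∈ A, a * b = b * a)
    (hAtf : ∀ a ∈ A, ∀ n : ℕ, n ≠ 0 → a ^ n = 1 → a = 1)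
    (hAker : A ≤ th.ker)
    (hact : ∀ g : Ghat, ∀ a ∈ A, g * a * g⁻¹ = padicPow p a ((th g : ℤ_[p]ˣ) : ℤ_[p]))
    (hinf : A ⊓ C = ⊥) (hsup : A ⊔ C = ⊤) :
    Ktheta p th = (Ktheta p (th.comp C.subtype)).map C.subtype ∧
    (IsKummerian p th ↔ IsKummerian p (th.comp C.subtype)) ∧
    ((IsKummerian p th ∧ IsFreeProP p (Ktheta p th)) ↔
      (IsKummerian p (th.comp C.subtype) ∧
        IsFreeProP p (Ktheta p (th.comp C.subtype)))) :=
  stmt13_general p Ghat hG th A C hAnormal hCclosed hAtf hAker hact hinf hsup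
end
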